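/- arXiv:2211.10037 — 4 statements merged into one kernel-verified Lean document; each statement's English description precedes it below -/
import Mathlib

section
/- Let C be a braided monoidal category in which every object has a right dual, and let J be a class of objects of C that is closed under retracts (if Y ∈ J and X is a retract of Y then X ∈ J) and closed under tensoring with arbitrary objects on either side (if Y ∈ J then Y ⊗ X ∈ J and X ⊗ Y ∈ J for every object X). If M is an object of C such that the n-th tensor power M^{⊗n} belongs to J for some n ≥ 1, then M belongs to J. -/
/-!
Zig-zag exhibits `M` as a retract of `M ⊗ (Mᘁ ⊗ M)`. Substituting into the left factor a
retract `M → W ⊗ M^{⊗k}` and braiding `M^{⊗k}` past `Mᘁ` shows that `M` is a retract of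
`(W ⊗ Mᘁ) ⊗ M^{⊗(k+1)}`; by induction `M` is a retract of some `W ⊗ M^{⊗n}`, which lies in `J`.
-/

open CategoryTheory MonoidalCategory

/-- The `n`-th tensor power of an object in a monoidal category,
with `M^{⊗0} = 𝟙` and `M^{⊗(n+1)} = M^{⊗n} ⊗ M`. -/
def tensorPowObj {C : Type*} [Category C] [MonoidalCategory C] (M : C) : ℕ → C
  | 0 => 𝟙_ C
  | n + 1 => tensorPowObj M n ⊗ M

namespace CategoryTheory.Retract

variable {C : Type*} [Category C] [MonoidalCategory C]

def ofExactPairing (X Y : C) [ExactPairing X Y] : Retract X (X ⊗ (Y ⊗ X)) where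
  i := (λ_ X).inv ≫ η_ X Y ▷ X ≫ (α_ X Y X).hom
  r := X ◁ ε_ X Y ≫ (ρ_ X).hom

def tensorμ [BraidedCategory C] (X₁ X₂ Y₁ Y₂ : C) :
    Retract ((X₁ ⊗ X₂) ⊗ (Y₁ ⊗ Y₂)) ((X₁ ⊗ Y₁) ⊗ (X₂ ⊗ Y₂)) :=
  ⟨MonoidalCategory.tensorμ X₁ X₂ Y₁ Y₂, tensorδ X₁ X₂ Y₁ Y₂, tensorμ_tensorδ X₁ X₂ Y₁ Y₂⟩

end CategoryTheory.Retract

theorem exists_retract_tensor_tensorPowObj {C : Type*} [Category C] [MonoidalCategory C]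
    [BraidedCategory C] (M : C) [HasRightDual M] (n : ℕ) :
    ∃ W : C, Nonempty (Retract M (W ⊗ tensorPowObj M n)) := by
  induction n with
  | zero => exact ⟨M, ⟨.ofIso (ρ_ M).symm⟩⟩
  | succ k ih =>
    obtain ⟨W, ⟨e⟩⟩ := ih
    exact ⟨W ⊗ Mᘁ, ⟨((Retract.ofExactPairing M Mᘁ).trans
      (e.map (tensorRight (Mᘁ ⊗ M)))).trans (Retract.tensorμ W (tensorPowObj M k) Mᘁ M)⟩⟩

theorem stmt1_general {C : Type*} [Category C] [MonoidalCategory C] [BraidedCategory C]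
    [RightRigidCategory C] (J : Set C)
    (hretract : ∀ X Y : C, (∃ (i : X ⟶ Y) (r : Y ⟶ X), i ≫ r = 𝟙 X) → Y ∈ J → X ∈ J)
    (htensor_left : ∀ X Y : C, Y ∈ J → (X ⊗ Y) ∈ J)
    (M : C) (n : ℕ) (h : tensorPowObj M n ∈ J) : M ∈ J := by
  obtain ⟨W, ⟨e⟩⟩ := exists_retract_tensor_tensorPowObj M n
  exact hretract M _ ⟨e.i, e.r, e.retract⟩ (htensor_left W _ h)

/-- In a braided monoidal category in which every object has a right dual, if a class of
objects `J` is closed under retracts and under tensoring with arbitrary objects on either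
side, and some tensor power `M^{⊗n}` with `n ≥ 1` belongs to `J`, then `M` belongs to `J`. -/
theorem stmt1 {C : Type*} [Category C] [MonoidalCategory C] [BraidedCategory C]
    [RightRigidCategory C] (J : Set C)
    (hretract : ∀ X Y : C, (∃ (i : X ⟶ Y) (r : Y ⟶ X), i ≫ r = 𝟙 X) → Y ∈ J → X ∈ J)
    (htensor_right : ∀ X Y : C, Y ∈ J → (Y ⊗ X) ∈ J)
    (htensor_left : ∀ X Y : C, Y ∈ J → (X ⊗ Y) ∈ J)
    (M : C) (n : ℕ) (hn : 1 ≤ n) (h : tensorPowObj M n ∈ J) : M ∈ J :=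
  stmt1_general J hretract htensor_left M n h
end

section
/- Let C be an abelian category equipped with a braided monoidal structure in which every object has a right dual and in which the tensor product is exact in each variable. Let J₀ be a thick tensor ideal in C with the two-out-of-three property, let M be an object of C such that no tensor power M^{⊗n} (n ≥ 0, with M^{⊗0} = 𝟙) belongs to J₀, and suppose P is maximal with respect to inclusion among the thick tensor ideals with the two-out-of-three property that contain J₀ and contain no tensor power M^{⊗n} (n ≥ 0). Then P is a prime thick tensor ideal: P is proper, and for all objects A, B of C, if A ⊗ B ∈ P then A ∈ P or B ∈ P. -/
open CategoryTheory Limits MonoidalCategory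

/-- A thick tensor ideal in an abelian monoidal category: a class of objects containing the
zero object and closed under finite direct sums, retracts and tensoring with arbitrary
objects on either side. -/
structure IsThickTensorIdeal {C : Type*} [Category C] [Abelian C] [MonoidalCategory C]
    (J : Set C) : Prop where
  zero_mem : ∀ X : C, IsZero X → X ∈ J
  biprod_mem : ∀ X Y : C, X ∈ J → Y ∈ J → (X ⊞ Y) ∈ J
  retract_mem : ∀ X Y : C, (∃ (i : X ⟶ Y) (r : Y ⟶ X), i ≫ r = 𝟙 X) → Y ∈ J → X ∈ J
  tensor_mem_left : ∀ X Y : C, Y ∈ J → (X ⊗ Y) ∈ J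
  tensor_mem_right : ∀ X Y : C, Y ∈ J → (Y ⊗ X) ∈ J

/-- A class of objects `J` has the two-out-of-three property if for every short exact
sequence `0 → X₁ → X₂ → X₃ → 0` in which two of `X₁`, `X₂`, `X₃` belong to `J`,
the third also belongs to `J`. -/
def TwoOutOfThree {C : Type*} [Category C] [Abelian C] (J : Set C) : Prop :=
  ∀ S : ShortComplex C, S.ShortExact →
    ((S.X₁ ∈ J → S.X₂ ∈ J → S.X₃ ∈ J) ∧ (S.X₁ ∈ J → S.X₃ ∈ J → S.X₂ ∈ J) ∧
      (S.X₂ ∈ J → S.X₃ ∈ J → S.X₁ ∈ J))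

/-- A prime thick tensor ideal with the two-out-of-three property: it is proper (does not
contain the monoidal unit) and `A ⊗ B ∈ P` implies `A ∈ P` or `B ∈ P`. -/
def IsPrimeThickTensorIdeal {C : Type*} [Category C] [Abelian C] [MonoidalCategory C]
    (P : Set C) : Prop :=
  IsThickTensorIdeal P ∧ TwoOutOfThree P ∧ (𝟙_ C) ∉ P ∧
    ∀ A B : C, (A ⊗ B) ∈ P → A ∈ P ∨ B ∈ P

/-- Thick tensor ideals are closed under isomorphism. -/
lemma IsThickTensorIdeal.mem_of_iso {C : Type*} [Category C] [Abelian C] [MonoidalCategory C]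
    {J : Set C} (hJ : IsThickTensorIdeal J) {X Y : C} (e : X ≅ Y) (hY : Y ∈ J) : X ∈ J :=
  hJ.retract_mem X Y ⟨e.hom, e.inv, e.hom_inv_id⟩ hY

/-- Tensor powers multiply. -/
noncomputable def tensorPowObjAdd {C : Type*} [Category C] [MonoidalCategory C] (M : C) :
    ∀ m n : ℕ, tensorPowObj M m ⊗ tensorPowObj M n ≅ tensorPowObj M (m + n)
  | m, 0 => ρ_ _
  | m, n + 1 =>
      (α_ (tensorPowObj M m) (tensorPowObj M n) M).symm ≪≫
        whiskerRightIso (tensorPowObjAdd M m n) M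

/-- The "quotient" of an ideal by an object is a thick tensor ideal with two-out-of-three. -/
lemma quot_ideal {C : Type*} [Category C] [Abelian C] [MonoidalCategory C] [BraidedCategory C]
    (hR : ∀ X : C, PreservesFiniteLimits (tensorRight X))
    (hR' : ∀ X : C, PreservesFiniteColimits (tensorRight X))
    (P : Set C) (hP : IsThickTensorIdeal P) (hP23 : TwoOutOfThree P) (N : C) :
    IsThickTensorIdeal {X : C | X ⊗ N ∈ P} ∧ TwoOutOfThree {X : C | X ⊗ N ∈ P} := by
  have := hR N
  have := hR' N
  have : PreservesBinaryBiproducts (tensorRight N) :=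
    preservesBinaryBiproducts_of_preservesBinaryProducts _
  constructor
  · constructor
    · intro X hX
      exact hP.zero_mem _ ((tensorRight N).map_isZero hX)
    · intro X Y hX hY
      exact hP.mem_of_iso ((tensorRight N).mapBiprod X Y) (hP.biprod_mem _ _ hX hY)
    · rintro X Y ⟨i, r, hir⟩ hY
      refine hP.retract_mem _ _ ⟨(tensorRight N).map i, (tensorRight N).map r, ?_⟩ hY
      rw [← (tensorRight N).map_comp, hir, (tensorRight N).map_id]; rfl
    · intro X Y hY
      exact hP.mem_of_iso (α_ X Y N) (hP.tensor_mem_left _ _ hY)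
    · intro X Y hY
      exact hP.mem_of_iso (α_ Y X N ≪≫ whiskerLeftIso Y (β_ X N) ≪≫ (α_ Y N X).symm)
        (hP.tensor_mem_right _ _ hY)
  · intro S hS
    exact hP23 (S.map (tensorRight N)) (hS.map_of_exact (tensorRight N))

/-- Balmer's Lemma 2.2 in the abelian monoidal setting: a thick tensor ideal with the
two-out-of-three property which is maximal among those containing `J₀` and containing no
tensor power of `M` is prime. -/
theorem stmt4 {C : Type*} [Category C] [Abelian C] [MonoidalCategory C] [BraidedCategory C]
    [RightRigidCategory C]
    (hL : ∀ X : C, PreservesFiniteLimits (tensorLeft X))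
    (hL' : ∀ X : C, PreservesFiniteColimits (tensorLeft X))
    (hR : ∀ X : C, PreservesFiniteLimits (tensorRight X))
    (hR' : ∀ X : C, PreservesFiniteColimits (tensorRight X))
    (J₀ : Set C) (hJ₀ : IsThickTensorIdeal J₀) (hJ₀23 : TwoOutOfThree J₀)
    (M : C) (hM : ∀ n : ℕ, tensorPowObj M n ∉ J₀)
    (P : Set C) (hP : IsThickTensorIdeal P) (hP23 : TwoOutOfThree P)
    (hJ₀P : J₀ ⊆ P) (hMP : ∀ n : ℕ, tensorPowObj M n ∉ P)
    (hmax : ∀ Q : Set C, IsThickTensorIdeal Q → TwoOutOfThree Q → J₀ ⊆ Q →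
      (∀ n : ℕ, tensorPowObj M n ∉ Q) → P ⊆ Q → Q = P) :
    (𝟙_ C) ∉ P ∧ ∀ A B : C, (A ⊗ B) ∈ P → A ∈ P ∨ B ∈ P := by
  -- a general "enlargement" step: if `W ⊗ N ∈ P` but `W ∉ P`, then some power of `M`
  -- tensored with `N` lies in `P`.
  have key : ∀ W N : C, (W ⊗ N) ∈ P → W ∉ P → ∃ n : ℕ, tensorPowObj M n ⊗ N ∈ P := by
    intro W N hWN hW
    by_contra hn
    push_neg at hn
    obtain ⟨hQ, hQ23⟩ := quot_ideal hR hR' P hP hP23 N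
    have hQeq : {X : C | X ⊗ N ∈ P} = P := by
      refine hmax _ hQ hQ23 (fun X hX => hP.tensor_mem_right N X (hJ₀P hX)) hn
        (fun X hX => hP.tensor_mem_right N X hX)
    exact hW (hQeq ▸ hWN)
  constructor
  · intro h
    exact hMP 0 h
  · intro A B hAB
    by_contra hcon
    push_neg at hcon
    obtain ⟨hA, hB⟩ := hcon
    obtain ⟨n, hn⟩ := key A B hAB hA
    -- `M^n ⊗ B ∈ P`, so `B ⊗ M^n ∈ P`
    have hBn : (B ⊗ tensorPowObj M n) ∈ P := hP.mem_of_iso (β_ B (tensorPowObj M n)) hn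
    obtain ⟨m, hm⟩ := key B (tensorPowObj M n) hBn hB
    exact hMP (m + n) (hP.mem_of_iso (tensorPowObjAdd M m n).symm hm)
end

section
/- Let C be an abelian category equipped with a braided monoidal structure in which every object has a right dual and in which the tensor product is exact in each variable. Let J be a thick tensor ideal in C with the two-out-of-three property and let M be an object of C not belonging to J. Then there exists a prime thick tensor ideal P in C with the two-out-of-three property such that J ⊆ P and M ∉ P. -/
open CategoryTheory Limits MonoidalCategory

section Aux

variable {C : Type*} [Category C] [Abelian C] [MonoidalCategory C]

/-- Thick tensor ideals are closed under isomorphism. -/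
lemma IsThickTensorIdeal.iso_mem {J : Set C} (hJ : IsThickTensorIdeal J) {X Y : C}
    (e : X ≅ Y) (hY : Y ∈ J) : X ∈ J :=
  hJ.retract_mem X Y ⟨e.hom, e.inv, e.hom_inv_id⟩ hY

/-- If `M ⊗ M` lies in a thick tensor ideal, then so does `M`, using the right dual of `M`
and the braiding. -/
lemma IsThickTensorIdeal.of_sq_mem [BraidedCategory C] [RightRigidCategory C]
    {J : Set C} (hJ : IsThickTensorIdeal J) {M : C} (h : (M ⊗ M) ∈ J) : M ∈ J := by
  -- `M` is a retract of `(M ⊗ Mᘁ) ⊗ M` by the zigzag identity.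
  have hretract : ∃ (i : M ⟶ (M ⊗ Mᘁ) ⊗ M) (r : (M ⊗ Mᘁ) ⊗ M ⟶ M), i ≫ r = 𝟙 M := by
    refine ⟨(λ_ M).inv ≫ (η_ M Mᘁ ▷ M), (α_ M Mᘁ M).hom ≫ (M ◁ ε_ M Mᘁ) ≫ (ρ_ M).hom, ?_⟩
    have := ExactPairing.evaluation_coevaluation M Mᘁ
    simp only [Category.assoc]
    rw [← Category.assoc (η_ M Mᘁ ▷ M), ← Category.assoc _ (M ◁ ε_ M Mᘁ),
      Category.assoc (η_ M Mᘁ ▷ M), this]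
    simp
  -- `(M ⊗ Mᘁ) ⊗ M ≅ Mᘁ ⊗ (M ⊗ M)` lies in `J`.
  have hmem : ((M ⊗ Mᘁ) ⊗ M) ∈ J := by
    have h1 : (Mᘁ ⊗ (M ⊗ M)) ∈ J := hJ.tensor_mem_left _ _ h
    exact hJ.iso_mem (whiskerRightIso (β_ M Mᘁ) M ≪≫ α_ _ _ _) h1
  exact hJ.retract_mem _ _ hretract hmem

/-- The closure of a class of objects under the operations of a thick tensor ideal with
the two-out-of-three property. -/
inductive idealClosure (S : Set C) : C → Prop
  | base {X : C} : X ∈ S → idealClosure S X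
  | zero (X : C) : IsZero X → idealClosure S X
  | biprod (X Y : C) : idealClosure S X → idealClosure S Y → idealClosure S (X ⊞ Y)
  | retract (X Y : C) : (∃ (i : X ⟶ Y) (r : Y ⟶ X), i ≫ r = 𝟙 X) → idealClosure S Y →
      idealClosure S X
  | tensorL (X Y : C) : idealClosure S Y → idealClosure S (X ⊗ Y)
  | tensorR (X Y : C) : idealClosure S Y → idealClosure S (Y ⊗ X)
  | ext12 (T : ShortComplex C) : T.ShortExact → idealClosure S T.X₁ → idealClosure S T.X₂ →
      idealClosure S T.X₃
  | ext13 (T : ShortComplex C) : T.ShortExact → idealClosure S T.X₁ → idealClosure S T.X₃ →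
      idealClosure S T.X₂
  | ext23 (T : ShortComplex C) : T.ShortExact → idealClosure S T.X₂ → idealClosure S T.X₃ →
      idealClosure S T.X₁

lemma idealClosure_isThickTensorIdeal (S : Set C) :
    IsThickTensorIdeal {X : C | idealClosure S X} where
  zero_mem := fun X hX => idealClosure.zero X hX
  biprod_mem := fun X Y hX hY => idealClosure.biprod X Y hX hY
  retract_mem := fun X Y h hY => idealClosure.retract X Y h hY
  tensor_mem_left := fun X Y hY => idealClosure.tensorL X Y hY
  tensor_mem_right := fun X Y hY => idealClosure.tensorR X Y hY

lemma idealClosure_twoOutOfThree (S : Set C) :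
    TwoOutOfThree {X : C | idealClosure S X} := fun T hT =>
  ⟨fun h1 h2 => idealClosure.ext12 T hT h1 h2, fun h1 h3 => idealClosure.ext13 T hT h1 h3,
    fun h2 h3 => idealClosure.ext23 T hT h2 h3⟩

lemma idealClosure_subset (S : Set C) : S ⊆ {X : C | idealClosure S X} :=
  fun _ hX => idealClosure.base hX

/-- Key absorption lemma: if `P` is a thick tensor ideal with the two-out-of-three
property and `A ⊗ Z ∈ P`, then `X ⊗ Z ∈ P` for every `X` in the closure of
`P ∪ {A}`. -/
lemma idealClosure_tensor_mem [BraidedCategory C]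
    (hRlim : ∀ X : C, PreservesFiniteLimits (tensorRight X))
    (hRcolim : ∀ X : C, PreservesFiniteColimits (tensorRight X))
    {P : Set C} (hP : IsThickTensorIdeal P) (hP23 : TwoOutOfThree P)
    (A Z : C) (hAZ : (A ⊗ Z) ∈ P) :
    ∀ X : C, idealClosure (insert A P) X → (X ⊗ Z) ∈ P := by
  have : PreservesFiniteLimits (tensorRight Z) := hRlim Z
  have : PreservesFiniteColimits (tensorRight Z) := hRcolim Z
  intro X hX
  induction hX with
  | base h =>
      rcases h with rfl | h
      · exact hAZ
      · exact hP.tensor_mem_right Z _ h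
  | zero X h =>
      exact hP.zero_mem _ ((tensorRight Z).map_isZero h)
  | biprod X Y hX hY ihX ihY =>
      have : PreservesBinaryBiproduct X Y (tensorRight Z) :=
        preservesBinaryBiproduct_of_preservesBinaryProduct _
      have e : ((X ⊞ Y) ⊗ Z) ≅ ((X ⊗ Z) ⊞ (Y ⊗ Z)) := (tensorRight Z).mapBiprod X Y
      exact hP.iso_mem e (hP.biprod_mem _ _ ihX ihY)
  | retract X Y h hY ih =>
      obtain ⟨i, r, hir⟩ := h
      refine hP.retract_mem _ _ ⟨i ▷ Z, r ▷ Z, ?_⟩ ih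
      rw [← comp_whiskerRight, hir, id_whiskerRight]
  | tensorL W Y hY ih =>
      exact hP.iso_mem (α_ W Y Z) (hP.tensor_mem_left W _ ih)
  | tensorR W Y hY ih =>
      have e : ((Y ⊗ W) ⊗ Z) ≅ ((Y ⊗ Z) ⊗ W) :=
        α_ Y W Z ≪≫ whiskerLeftIso Y (β_ W Z) ≪≫ (α_ Y Z W).symm
      exact hP.iso_mem e (hP.tensor_mem_right W _ ih)
  | ext12 T hT h1 h2 ih1 ih2 =>
      exact ((hP23 _ (hT.map_of_exact (tensorRight Z))).1 ih1 ih2 : (T.X₃ ⊗ Z) ∈ P)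
  | ext13 T hT h1 h3 ih1 ih3 =>
      exact ((hP23 _ (hT.map_of_exact (tensorRight Z))).2.1 ih1 ih3 : (T.X₂ ⊗ Z) ∈ P)
  | ext23 T hT h2 h3 ih2 ih3 =>
      exact ((hP23 _ (hT.map_of_exact (tensorRight Z))).2.2 ih2 ih3 : (T.X₁ ⊗ Z) ∈ P)

end Aux

/-- For every thick tensor ideal `J` with the two-out-of-three property and every object
`M ∉ J`, there is a prime thick tensor ideal `P` with the two-out-of-three property such
that `J ⊆ P` and `M ∉ P`. -/
theorem stmt5 {C : Type*} [Category C] [Abelian C] [MonoidalCategory C] [BraidedCategory C]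
    [RightRigidCategory C]
    (hL : ∀ X : C, PreservesFiniteLimits (tensorLeft X))
    (hL' : ∀ X : C, PreservesFiniteColimits (tensorLeft X))
    (hR : ∀ X : C, PreservesFiniteLimits (tensorRight X))
    (hR' : ∀ X : C, PreservesFiniteColimits (tensorRight X))
    (J : Set C) (hJ : IsThickTensorIdeal J) (hJ23 : TwoOutOfThree J)
    (M : C) (hM : M ∉ J) :
    ∃ P : Set C, IsPrimeThickTensorIdeal P ∧ J ⊆ P ∧ M ∉ P := by
  -- The family of thick tensor ideals with 2/3 containing `J` and avoiding `M`.
  set 𝒮 : Set (Set C) :=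
    {K | IsThickTensorIdeal K ∧ TwoOutOfThree K ∧ J ⊆ K ∧ M ∉ K} with h𝒮
  have hub : ∀ c ⊆ 𝒮, IsChain (· ⊆ ·) c → c.Nonempty → ∃ ub ∈ 𝒮, ∀ s ∈ c, s ⊆ ub := by
    intro c hc𝒮 hchain hcne
    obtain ⟨K₀, hK₀⟩ := hcne
    refine ⟨⋃₀ c, ⟨?_, ?_, ?_, ?_⟩, fun s hs => Set.subset_sUnion_of_mem hs⟩
    · constructor
      · intro X hX
        exact ⟨K₀, hK₀, (hc𝒮 hK₀).1.zero_mem X hX⟩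
      · rintro X Y ⟨KX, hKX, hXmem⟩ ⟨KY, hKY, hYmem⟩
        rcases hchain.total hKX hKY with h | h
        · exact ⟨KY, hKY, (hc𝒮 hKY).1.biprod_mem X Y (h hXmem) hYmem⟩
        · exact ⟨KX, hKX, (hc𝒮 hKX).1.biprod_mem X Y hXmem (h hYmem)⟩
      · rintro X Y h ⟨K, hK, hYmem⟩
        exact ⟨K, hK, (hc𝒮 hK).1.retract_mem X Y h hYmem⟩
      · rintro X Y ⟨K, hK, hYmem⟩
        exact ⟨K, hK, (hc𝒮 hK).1.tensor_mem_left X Y hYmem⟩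
      · rintro X Y ⟨K, hK, hYmem⟩
        exact ⟨K, hK, (hc𝒮 hK).1.tensor_mem_right X Y hYmem⟩
    · intro T hT
      refine ⟨?_, ?_, ?_⟩
      · rintro ⟨K1, hK1, h1⟩ ⟨K2, hK2, h2⟩
        rcases hchain.total hK1 hK2 with h | h
        · exact ⟨K2, hK2, ((hc𝒮 hK2).2.1 T hT).1 (h h1) h2⟩
        · exact ⟨K1, hK1, ((hc𝒮 hK1).2.1 T hT).1 h1 (h h2)⟩
      · rintro ⟨K1, hK1, h1⟩ ⟨K2, hK2, h2⟩
        rcases hchain.total hK1 hK2 with h | h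
        · exact ⟨K2, hK2, ((hc𝒮 hK2).2.1 T hT).2.1 (h h1) h2⟩
        · exact ⟨K1, hK1, ((hc𝒮 hK1).2.1 T hT).2.1 h1 (h h2)⟩
      · rintro ⟨K1, hK1, h1⟩ ⟨K2, hK2, h2⟩
        rcases hchain.total hK1 hK2 with h | h
        · exact ⟨K2, hK2, ((hc𝒮 hK2).2.1 T hT).2.2 (h h1) h2⟩
        · exact ⟨K1, hK1, ((hc𝒮 hK1).2.1 T hT).2.2 h1 (h h2)⟩
    · exact fun X hX => ⟨K₀, hK₀, (hc𝒮 hK₀).2.2.1 hX⟩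
    · rintro ⟨K, hK, hMK⟩
      exact (hc𝒮 hK).2.2.2 hMK
  obtain ⟨P, hJP, hPmax⟩ := zorn_subset_nonempty 𝒮 hub J ⟨hJ, hJ23, subset_rfl, hM⟩
  obtain ⟨hP, hP23, hJsub, hMP⟩ := hPmax.1
  refine ⟨P, ⟨hP, hP23, ?_, ?_⟩, hJsub, hMP⟩
  · intro hunit
    exact hMP (hP.iso_mem (ρ_ M).symm (hP.tensor_mem_left M _ hunit))
  · intro A B hAB
    by_contra hcon
    push_neg at hcon
    obtain ⟨hA, hB⟩ := hcon
    -- `M` belongs to the closure of `P ∪ {A}` and of `P ∪ {B}` by maximality.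
    have hMcl : ∀ X : C, X ∉ P → idealClosure (insert X P) M := by
      intro X hX
      by_contra hMc
      have hsub : P ⊆ {Y : C | idealClosure (insert X P) Y} :=
        fun Y hY => idealClosure.base (Set.mem_insert_of_mem _ hY)
      have hKmem : {Y : C | idealClosure (insert X P) Y} ∈ 𝒮 :=
        ⟨idealClosure_isThickTensorIdeal _, idealClosure_twoOutOfThree _,
          hJsub.trans hsub, hMc⟩
      exact hX (hPmax.2 hKmem hsub (idealClosure.base (Set.mem_insert _ _)))
    have hMA : idealClosure (insert A P) M := hMcl A hA
    have hMB : idealClosure (insert B P) M := hMcl B hB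
    -- First absorption: `M ⊗ B ∈ P`.
    have h1 : (M ⊗ B) ∈ P :=
      idealClosure_tensor_mem hR hR' hP hP23 A B hAB M hMA
    -- Hence `B ⊗ M ∈ P` by braiding.
    have h2 : (B ⊗ M) ∈ P := hP.iso_mem (β_ B M) h1
    -- Second absorption: `M ⊗ M ∈ P`.
    have h3 : (M ⊗ M) ∈ P :=
      idealClosure_tensor_mem hR hR' hP hP23 B M h2 M hMB
    exact hMP (hP.of_sq_mem h3)
end

section
/- Let C be an abelian category equipped with a braided monoidal structure in which every object has a right dual and in which the tensor product is exact in each variable. Let J be a proper thick tensor ideal in C with the two-out-of-three property. Then J equals the intersection of all prime thick tensor ideals P in C with the two-out-of-three property satisfying J ⊆ P; that is, an object M of C belongs to J if and only if M belongs to every prime thick tensor ideal with the two-out-of-three property that contains J. -/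
open CategoryTheory Limits MonoidalCategory

namespace Stmt6Aux

variable {C : Type*} [Category C] [Abelian C] [MonoidalCategory C]

lemma mem_of_iso {K : Set C} (hK : IsThickTensorIdeal K) {X Y : C} (e : X ≅ Y) (hY : Y ∈ K) :
    X ∈ K :=
  hK.retract_mem X Y ⟨e.hom, e.inv, e.hom_inv_id⟩ hY

/-- The thick tensor ideal with two-out-of-three generated by a set of objects. -/
def genI (S : Set C) : Set C :=
  {X | ∀ K : Set C, IsThickTensorIdeal K → TwoOutOfThree K → S ⊆ K → X ∈ K}

lemma subset_genI (S : Set C) : S ⊆ genI S := fun _ hX K _ _ hSK => hSK hX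

lemma genI_subset {S K : Set C} (hK : IsThickTensorIdeal K) (h23 : TwoOutOfThree K)
    (hSK : S ⊆ K) : genI S ⊆ K := fun _ hX => hX K hK h23 hSK

lemma genI_ideal (S : Set C) : IsThickTensorIdeal (genI S) where
  zero_mem X hX K hK _ _ := hK.zero_mem X hX
  biprod_mem X Y hX hY K hK h23 hSK := hK.biprod_mem X Y (hX K hK h23 hSK) (hY K hK h23 hSK)
  retract_mem X Y h hY K hK h23 hSK := hK.retract_mem X Y h (hY K hK h23 hSK)
  tensor_mem_left X Y hY K hK h23 hSK := hK.tensor_mem_left X Y (hY K hK h23 hSK)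
  tensor_mem_right X Y hY K hK h23 hSK := hK.tensor_mem_right X Y (hY K hK h23 hSK)

lemma genI_23 (S : Set C) : TwoOutOfThree (genI S) := fun T hT =>
  ⟨fun h1 h2 K hK h23 hSK => ((h23 T hT).1) (h1 K hK h23 hSK) (h2 K hK h23 hSK),
   fun h1 h2 K hK h23 hSK => ((h23 T hT).2.1) (h1 K hK h23 hSK) (h2 K hK h23 hSK),
   fun h1 h2 K hK h23 hSK => ((h23 T hT).2.2) (h1 K hK h23 hSK) (h2 K hK h23 hSK)⟩

/-- The left transporter `{Y | A ⊗ Y ∈ Q}` of a thick tensor ideal with 2/3 is again one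
(in a braided category with exact tensor product). -/
lemma leftTrans [BraidedCategory C]
    (hL : ∀ X : C, PreservesFiniteLimits (tensorLeft X))
    (hL' : ∀ X : C, PreservesFiniteColimits (tensorLeft X))
    {Q : Set C} (hQ : IsThickTensorIdeal Q) (hQ23 : TwoOutOfThree Q) (A : C) :
    IsThickTensorIdeal {Y : C | A ⊗ Y ∈ Q} ∧ TwoOutOfThree {Y : C | A ⊗ Y ∈ Q} := by
  haveI := hL A
  haveI := hL' A
  haveI : (tensorLeft A).PreservesZeroMorphisms := inferInstance
  haveI : PreservesBinaryBiproducts (tensorLeft A) :=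
    preservesBinaryBiproducts_of_preservesBinaryProducts _
  constructor
  · constructor
    · intro X hX
      exact hQ.zero_mem _ ((tensorLeft A).map_isZero hX)
    · intro X Y hX hY
      exact mem_of_iso hQ (Functor.mapBiprod (tensorLeft A) X Y) (hQ.biprod_mem _ _ hX hY)
    · rintro X Y ⟨i, r, hir⟩ hY
      refine hQ.retract_mem _ _ ⟨A ◁ i, A ◁ r, ?_⟩ hY
      rw [← MonoidalCategory.whiskerLeft_comp, hir, MonoidalCategory.whiskerLeft_id]
    · intro W Y hY
      exact mem_of_iso hQ
        ((α_ A W Y).symm ≪≫ whiskerRightIso (β_ A W) Y ≪≫ α_ W A Y)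
        (hQ.tensor_mem_left W _ hY)
    · intro W Y hY
      exact mem_of_iso hQ (α_ A Y W).symm (hQ.tensor_mem_right W _ hY)
  · intro S hS
    have h := hQ23 (S.map (tensorLeft A)) (hS.map_of_exact (tensorLeft A))
    exact h

/-- The transporter `{X | ∀ Y ∈ R, X ⊗ Y ∈ Q}` of thick tensor ideals with 2/3 is again one. -/
lemma rightTransForall
    (hR : ∀ X : C, PreservesFiniteLimits (tensorRight X))
    (hR' : ∀ X : C, PreservesFiniteColimits (tensorRight X))
    {Q R : Set C} (hQ : IsThickTensorIdeal Q) (hQ23 : TwoOutOfThree Q)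
    (hRid : IsThickTensorIdeal R) :
    IsThickTensorIdeal {X : C | ∀ Y ∈ R, X ⊗ Y ∈ Q} ∧
      TwoOutOfThree {X : C | ∀ Y ∈ R, X ⊗ Y ∈ Q} := by
  have inst : ∀ Y : C, (tensorRight Y).PreservesZeroMorphisms := by
    intro Y
    haveI := hR Y
    haveI := hR' Y
    infer_instance
  constructor
  · constructor
    · intro X hX Y hY
      haveI := inst Y
      exact hQ.zero_mem _ ((tensorRight Y).map_isZero hX)
    · intro X X' hX hX' Y hY
      haveI := hR Y
      haveI := inst Y
      haveI : PreservesBinaryBiproducts (tensorRight Y) :=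
        preservesBinaryBiproducts_of_preservesBinaryProducts _
      exact mem_of_iso hQ (Functor.mapBiprod (tensorRight Y) X X')
        (hQ.biprod_mem _ _ (hX Y hY) (hX' Y hY))
    · rintro X X' ⟨i, r, hir⟩ hX' Y hY
      refine hQ.retract_mem _ _ ⟨i ▷ Y, r ▷ Y, ?_⟩ (hX' Y hY)
      rw [← MonoidalCategory.comp_whiskerRight, hir, MonoidalCategory.id_whiskerRight]
    · intro W X hX Y hY
      exact mem_of_iso hQ (α_ W X Y) (hQ.tensor_mem_left W _ (hX Y hY))
    · intro W X hX Y hY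
      exact mem_of_iso hQ (α_ X W Y) (hX (W ⊗ Y) (hRid.tensor_mem_left W Y hY))
  · intro S hS
    refine ⟨fun h1 h2 Y hY => ?_, fun h1 h2 Y hY => ?_, fun h1 h2 Y hY => ?_⟩ <;>
    · haveI := hR Y
      haveI := hR' Y
      haveI := inst Y
      have h := hQ23 (S.map (tensorRight Y)) (hS.map_of_exact (tensorRight Y))
      first
      | exact h.1 (h1 Y hY) (h2 Y hY)
      | exact h.2.1 (h1 Y hY) (h2 Y hY)
      | exact h.2.2 (h1 Y hY) (h2 Y hY)

def tensorPow_add (M : C) (m k : ℕ) :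
    tensorPowObj M m ⊗ tensorPowObj M k ≅ tensorPowObj M (m + k) := by
  induction k with
  | zero => exact ρ_ _
  | succ k ih =>
    exact (α_ _ _ M).symm ≪≫ whiskerRightIso ih M

lemma pow_mem [BraidedCategory C] [RightRigidCategory C] {K : Set C}
    (hK : IsThickTensorIdeal K) (M : C) :
    ∀ n : ℕ, tensorPowObj M (n + 1) ∈ K → M ∈ K := by
  have tri : ∃ (i : M ⟶ (M ⊗ Mᘁ) ⊗ M) (r : (M ⊗ Mᘁ) ⊗ M ⟶ M), i ≫ r = 𝟙 M := by
    refine ⟨(λ_ M).inv ≫ η_ M (Mᘁ) ▷ M,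
      (α_ M (Mᘁ) M).hom ≫ M ◁ ε_ M (Mᘁ) ≫ (ρ_ M).hom, ?_⟩
    simp [ExactPairing.evaluation_coevaluation_assoc]
  intro n
  induction n with
  | zero =>
    intro h
    simp only [tensorPowObj] at h
    exact mem_of_iso hK (λ_ M).symm h
  | succ n ih =>
    intro h
    apply ih
    simp only [tensorPowObj] at h ⊢
    obtain ⟨i, r, hir⟩ := tri
    refine hK.retract_mem _ (tensorPowObj M n ⊗ ((M ⊗ Mᘁ) ⊗ M))
      ⟨tensorPowObj M n ◁ i, tensorPowObj M n ◁ r, ?_⟩ ?_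
    · rw [← MonoidalCategory.whiskerLeft_comp, hir, MonoidalCategory.whiskerLeft_id]
    · refine mem_of_iso hK
        ((α_ (tensorPowObj M n) (M ⊗ Mᘁ) M).symm ≪≫
          whiskerRightIso (α_ (tensorPowObj M n) M (Mᘁ)).symm M ≪≫
          whiskerRightIso (β_ (tensorPowObj M n ⊗ M) (Mᘁ)) M ≪≫
          α_ (Mᘁ) (tensorPowObj M n ⊗ M) M)
        (hK.tensor_mem_left (Mᘁ) _ h)

end Stmt6Aux

open Stmt6Aux in
/-- A proper thick tensor ideal with the two-out-of-three property is the intersection of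
the prime thick tensor ideals with the two-out-of-three property containing it. -/
theorem stmt6 {C : Type*} [Category C] [Abelian C] [MonoidalCategory C] [BraidedCategory C]
    [RightRigidCategory C]
    (hL : ∀ X : C, PreservesFiniteLimits (tensorLeft X))
    (hL' : ∀ X : C, PreservesFiniteColimits (tensorLeft X))
    (hR : ∀ X : C, PreservesFiniteLimits (tensorRight X))
    (hR' : ∀ X : C, PreservesFiniteColimits (tensorRight X))
    (J : Set C) (hJ : IsThickTensorIdeal J) (hJ23 : TwoOutOfThree J)
    (hproper : (𝟙_ C) ∉ J) :
    ∀ M : C, M ∈ J ↔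
      ∀ P : Set C, IsPrimeThickTensorIdeal P → J ⊆ P → M ∈ P := by
  intro M
  constructor
  · intro hM P _ hJP
    exact hJP hM
  · intro h
    by_contra hM
    set F : Set (Set C) :=
      {K | IsThickTensorIdeal K ∧ TwoOutOfThree K ∧ J ⊆ K ∧
        ∀ n : ℕ, tensorPowObj M (n + 1) ∉ K} with hFdef
    have hJF : J ∈ F := ⟨hJ, hJ23, subset_rfl, fun n hn => hM (pow_mem hJ M n hn)⟩
    have hzorn : ∀ c ⊆ F, IsChain (· ⊆ ·) c → c.Nonempty →
        ∃ ub ∈ F, ∀ s ∈ c, s ⊆ ub := by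
      intro c hcF hchain hcne
      obtain ⟨K₀, hK₀⟩ := hcne
      refine ⟨⋃₀ c, ⟨?_, ?_, ?_, ?_⟩, fun s hs => Set.subset_sUnion_of_mem hs⟩
      · constructor
        · intro X hX
          exact ⟨K₀, hK₀, (hcF hK₀).1.zero_mem X hX⟩
        · rintro X Y ⟨K₁, hK₁c, hXK₁⟩ ⟨K₂, hK₂c, hYK₂⟩
          rcases hchain.total hK₁c hK₂c with hle | hle
          · exact ⟨K₂, hK₂c, (hcF hK₂c).1.biprod_mem X Y (hle hXK₁) hYK₂⟩
          · exact ⟨K₁, hK₁c, (hcF hK₁c).1.biprod_mem X Y hXK₁ (hle hYK₂)⟩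
        · rintro X Y hret ⟨K₁, hK₁c, hYK₁⟩
          exact ⟨K₁, hK₁c, (hcF hK₁c).1.retract_mem X Y hret hYK₁⟩
        · rintro X Y ⟨K₁, hK₁c, hYK₁⟩
          exact ⟨K₁, hK₁c, (hcF hK₁c).1.tensor_mem_left X Y hYK₁⟩
        · rintro X Y ⟨K₁, hK₁c, hYK₁⟩
          exact ⟨K₁, hK₁c, (hcF hK₁c).1.tensor_mem_right X Y hYK₁⟩
      · intro S hS
        refine ⟨?_, ?_, ?_⟩ <;>
        · rintro ⟨K₁, hK₁c, h1⟩ ⟨K₂, hK₂c, h2⟩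
          rcases hchain.total hK₁c hK₂c with hle | hle
          · refine ⟨K₂, hK₂c, ?_⟩
            have h23 := (hcF hK₂c).2.1 S hS
            first
            | exact h23.1 (hle h1) h2
            | exact h23.2.1 (hle h1) h2
            | exact h23.2.2 (hle h1) h2
          · refine ⟨K₁, hK₁c, ?_⟩
            have h23 := (hcF hK₁c).2.1 S hS
            first
            | exact h23.1 h1 (hle h2)
            | exact h23.2.1 h1 (hle h2)
            | exact h23.2.2 h1 (hle h2)
      · exact (hcF hK₀).2.2.1.trans (Set.subset_sUnion_of_mem hK₀)
      · rintro n ⟨K₁, hK₁c, hn⟩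
        exact (hcF hK₁c).2.2.2 n hn
    obtain ⟨P, hJsubP, hPmax⟩ := zorn_subset_nonempty F hzorn J hJF
    obtain ⟨hPid, hP23, -, hPpow⟩ := hPmax.1
    have hprime : ∀ A B : C, A ⊗ B ∈ P → A ∈ P ∨ B ∈ P := by
      intro A B hAB
      by_contra hcon
      push_neg at hcon
      obtain ⟨hA, hB⟩ := hcon
      have hPABsub : genI (P ∪ {A ⊗ B}) ⊆ P := by
        refine genI_subset hPid hP23 ?_
        rintro x (hx | hx)
        · exact hx
        · rw [Set.mem_singleton_iff] at hx
          exact hx ▸ hAB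
      have hgen : ∀ X : C, X ∉ P → ∃ n : ℕ, tensorPowObj M (n + 1) ∈ genI (P ∪ {X}) := by
        intro X hX
        by_contra hno
        push_neg at hno
        have hPsub : P ⊆ genI (P ∪ {X}) := Set.subset_union_left.trans (subset_genI _)
        have hmem : genI (P ∪ {X}) ∈ F :=
          ⟨genI_ideal _, genI_23 _, (hJsubP.trans hPsub), hno⟩
        have := hPmax.2 hmem hPsub
        exact hX (this (subset_genI _ (Or.inr rfl)))
      obtain ⟨a, ha⟩ := hgen A hA
      obtain ⟨b, hb⟩ := hgen B hB
      have hT' : genI (P ∪ {B}) ⊆ {Y : C | A ⊗ Y ∈ genI (P ∪ {A ⊗ B})} := by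
        have hlt := leftTrans hL hL' (genI_ideal (P ∪ {A ⊗ B})) (genI_23 _) A
        refine genI_subset hlt.1 hlt.2 ?_
        rintro Y (hY | hY)
        · exact subset_genI _ (Or.inl (hPid.tensor_mem_left A Y hY))
        · rw [Set.mem_singleton_iff] at hY
          subst hY
          exact subset_genI _ (Or.inr rfl)
      have hT : genI (P ∪ {A}) ⊆
          {X : C | ∀ Y ∈ genI (P ∪ {B}), X ⊗ Y ∈ genI (P ∪ {A ⊗ B})} := by
        have hrt := rightTransForall hR hR' (genI_ideal (P ∪ {A ⊗ B})) (genI_23 _)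
          (genI_ideal (P ∪ {B}))
        refine genI_subset hrt.1 hrt.2 ?_
        rintro X (hX | hX) Y hY
        · exact (genI_ideal _).tensor_mem_right Y X (subset_genI _ (Or.inl hX))
        · rw [Set.mem_singleton_iff] at hX
          subst hX
          exact hT' hY
      have hfin : tensorPowObj M (a + 1) ⊗ tensorPowObj M (b + 1) ∈ genI (P ∪ {A ⊗ B}) :=
        hT ha _ hb
      have hfin2 : tensorPowObj M ((a + 1) + (b + 1)) ∈ P :=
        hPABsub (mem_of_iso (genI_ideal _) (tensorPow_add M (a + 1) (b + 1)).symm hfin)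
      exact hPpow ((a + 1) + b) hfin2
    have hpow0 : (𝟙_ C) ⊗ M ∈ P → False := by
      intro hmem
      refine hPpow 0 ?_
      simpa only [tensorPowObj] using hmem
    have hunit : (𝟙_ C) ∉ P := fun hu => hpow0 (hPid.tensor_mem_right M _ hu)
    have hMP : M ∉ P := fun hm => hpow0 (hPid.tensor_mem_left _ M hm)
    exact hMP (h P ⟨hPid, hP23, hunit, hprime⟩ hJsubP)
end
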